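/- Let N be the set of coset leaders chosen via a degree-compatible term ordering (so each n ∈ N has minimal weight in its coset). Then for all n ∈ N and all i, the weights satisfy |wt(φ(n, e_i)) − wt(n)| ≤ 1. -/

import Mathlib

/-! Minimality is used once for each leader: `φ(m, eᵢ)` weighs at most as much as `m + eᵢ`,
which lies in its coset, and `m` at most as much as `φ(m, eᵢ) - eᵢ`, which lies in the coset
of `m`. -/

section Hamming

variable {ι : Type*} [Fintype ι] {β : ι → Type*} [∀ i, DecidableEq (β i)]

theorem hammingNorm_single_le [DecidableEq ι] [∀ i, Zero (β i)] (i : ι) (a : β i) :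
    hammingNorm (Pi.single i a) ≤ 1 := by
  have support_eq : ∀ j, Pi.single i a j ≠ 0 → j = i := fun j hj =>
    by_contra fun hji => hj (Pi.single_eq_of_ne hji a)
  refine Finset.card_le_one.mpr fun j hj k hk => ?_
  simp only [Finset.mem_filter, Finset.mem_univ, true_and] at hj hk
  exact (support_eq j hj).trans (support_eq k hk).symm

variable [∀ i, AddGroup (β i)]

theorem hammingNorm_neg (x : ∀ i, β i) : hammingNorm (-x) = hammingNorm x :=
  hammingNorm_comp (fun _ => Neg.neg) (fun _ => neg_injective) (fun _ => neg_zero)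

theorem hammingNorm_add_le (x y : ∀ i, β i) :
    hammingNorm (x + y) ≤ hammingNorm x + hammingNorm y := by
  simp only [← hammingDist_zero_left]
  calc hammingDist 0 (x + y) ≤ hammingDist 0 x + hammingDist x (x + y) :=
        hammingDist_triangle _ _ _
    _ = hammingDist 0 x + hammingDist 0 y := by
      rw [hammingDist_eq_hammingNorm x, neg_add_cancel_left, hammingDist_zero_left]

theorem hammingNorm_sub_le (x y : ∀ i, β i) :
    hammingNorm (x - y) ≤ hammingNorm x + hammingNorm y := by
  simpa only [sub_eq_add_neg, hammingNorm_neg] using hammingNorm_add_le x (-y)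

def IsCosetLeader (C : AddSubgroup (∀ i, β i)) (m : ∀ i, β i) : Prop :=
  ∀ v, v - m ∈ C → hammingNorm m ≤ hammingNorm v

theorem IsCosetLeader.abs_hammingNorm_sub_le {C : AddSubgroup (∀ i, β i)} {x y v : ∀ i, β i}
    (hx : IsCosetLeader C x) (hy : IsCosetLeader C y) (hxy : x + v - y ∈ C) :
    |(hammingNorm y : ℤ) - hammingNorm x| ≤ hammingNorm v := by
  have hyx : y - v - x ∈ C := by
    simpa only [neg_sub, sub_add_eq_sub_sub_swap] using C.neg_mem hxy
  have hy_le : hammingNorm y ≤ hammingNorm x + hammingNorm v :=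
    (hy _ hxy).trans (hammingNorm_add_le x v)
  have hx_le : hammingNorm x ≤ hammingNorm y + hammingNorm v :=
    (hx _ hyx).trans (hammingNorm_sub_le y v)
  rw [abs_sub_le_iff]
  omega

end Hamming

theorem phi_weight_diff_le_one_general (n : ℕ) (C : Submodule (ZMod 2) (Fin n → ZMod 2))
    (N : Set (Fin n → ZMod 2)) (φ : (Fin n → ZMod 2) → Fin n → (Fin n → ZMod 2))
    (hlead : ∀ m ∈ N, ∀ v : Fin n → ZMod 2, v - m ∈ C → hammingNorm m ≤ hammingNorm v)
    (hφ : ∀ m ∈ N, ∀ i : Fin n, φ m i ∈ N ∧ (m + Pi.single i 1) - φ m i ∈ C) :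
    ∀ m ∈ N, ∀ i : Fin n,
      |(hammingNorm (φ m i) : ℤ) - (hammingNorm m : ℤ)| ≤ 1 := by
  intro m hm i
  obtain ⟨hφN, hφC⟩ := hφ m hm i
  have hleader : ∀ x ∈ N, IsCosetLeader C.toAddSubgroup x := hlead
  calc |(hammingNorm (φ m i) : ℤ) - hammingNorm m|
      ≤ hammingNorm (Pi.single i (1 : ZMod 2)) :=
        (hleader m hm).abs_hammingNorm_sub_le (hleader _ hφN) hφC
    _ ≤ 1 := mod_cast hammingNorm_single_le i 1

/-- If the transversal `N` of a Gröbner representation consists of coset leaders,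
then applying `φ` with a standard basis vector changes the weight by at most 1. -/
theorem phi_weight_diff_le_one (n : ℕ) (C : Submodule (ZMod 2) (Fin n → ZMod 2))
    (N : Set (Fin n → ZMod 2)) (φ : (Fin n → ZMod 2) → Fin n → (Fin n → ZMod 2))
    (h0 : (0 : Fin n → ZMod 2) ∈ N)
    (htrans : ∀ y : Fin n → ZMod 2, ∃! m, m ∈ N ∧ y - m ∈ C)
    (hlead : ∀ m ∈ N, ∀ v : Fin n → ZMod 2, v - m ∈ C → hammingNorm m ≤ hammingNorm v)
    (hφ : ∀ m ∈ N, ∀ i : Fin n, φ m i ∈ N ∧ (m + Pi.single i 1) - φ m i ∈ C) :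
    ∀ m ∈ N, ∀ i : Fin n,
      |(hammingNorm (φ m i) : ℤ) - (hammingNorm m : ℤ)| ≤ 1 :=
  phi_weight_diff_le_one_general n C N φ hlead hφ
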